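/- Let z⁰ ∈ ℂ, z = (z¹,…,zⁿ) ∈ ℂⁿ, and ρ, σ ∈ ℝ. Define the vectors X := (z⁰, z⁰z¹, …, z⁰zⁿ, z⁰(ρ − ½Σ_a z^a z_a + iσ)), Y_b := (0, z⁰δ¹_b, …, z⁰δⁿ_b, −z⁰z_b) for b = 1,…,n, and Z := (0, …, 0, z⁰) in ℂ^{n+2}, where z_b := Σ_a h_{āb}·conj(z^a). For any vector W ∈ ℂ^{n+2} let W_B := Σ_A conj(W^A)·G_{AB} denote the g-lowered covector, and set Y^c_B := Σ_d (h^{-1})_{cd}·(Y_d)_B using the inverse matrix of h. Then for all A, B ∈ {0, 1, …, n, ∞}: |z⁰|²·δ^A_B = (X^A − ρ·Z^A)·Z_B + Z^A·(X_B − ρ·Z_B) + Σ_{c=1}^n (Y_c)^A·Y^c_B. -/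
import Mathlib


open scoped ComplexConjugate BigOperators Pointwise

noncomputable section

/-- Index set for the coordinates `(z⁰, z¹, …, zⁿ, z^∞)` of `ℂ^{n+2}`:
`Sum.inl ()` is the index `0`, `Sum.inr (Sum.inl a)` is the index `a ∈ {1, …, n}`, and
`Sum.inr (Sum.inr ())` is the index `∞`. -/
abbrev AmbIdx (n : ℕ) := Unit ⊕ (Fin n ⊕ Unit)

/-- The ambient space `ℂ^{n+2}`. -/
abbrev Amb (n : ℕ) := AmbIdx n → ℂ

/-- The matrix `G` of the ambient Hermitian metric
`g(u,v) = conj(u⁰)·v^∞ + conj(u^∞)·v⁰ + Σ_{a,b} h_{āb}·conj(u^a)·v^b`, so that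
`g(u,v) = Σ_{A,B} conj(u^A)·G_{AB}·v^B`. -/
def ambG {n : ℕ} (h : Matrix (Fin n) (Fin n) ℂ) : Matrix (AmbIdx n) (AmbIdx n) ℂ :=
  Matrix.of fun A B =>
    match A, B with
    | Sum.inl _, Sum.inr (Sum.inr _) => 1
    | Sum.inr (Sum.inr _), Sum.inl _ => 1
    | Sum.inr (Sum.inl a), Sum.inr (Sum.inl b) => h a b
    | _, _ => 0

/-- The holomorphic Wirtinger derivative `∂_A f = ½(∂f/∂x^A − i·∂f/∂y^A)` of a smooth
(in the real sense) function `f : ℂ^{n+2} → ℂ` at `z`. -/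
def wirt {n : ℕ} (f : Amb n → ℂ) (A : AmbIdx n) (z : Amb n) : ℂ :=
  (1 / 2) * (fderiv ℝ f z (Pi.single A 1) - Complex.I * fderiv ℝ f z (Pi.single A Complex.I))

/-- The antiholomorphic Wirtinger derivative `∂_Ā f = ½(∂f/∂x^A + i·∂f/∂y^A)`. -/
def wirtBar {n : ℕ} (f : Amb n → ℂ) (A : AmbIdx n) (z : Amb n) : ℂ :=
  (1 / 2) * (fderiv ℝ f z (Pi.single A 1) + Complex.I * fderiv ℝ f z (Pi.single A Complex.I))

/-- The ambient Laplacian `Δ̃f = Σ_{A,B} (G⁻¹)_{BA}·∂_A ∂_B̄ f`, with the index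
convention chosen so that `Δ̃f = Σ_A ∂_A ∂^A f` where `∂^A f = Σ_C (G⁻¹)_{AC}·∂_C̄ f`. -/
def ambLap {n : ℕ} (h : Matrix (Fin n) (Fin n) ℂ) (f : Amb n → ℂ) (z : Amb n) : ℂ :=
  ∑ A : AmbIdx n, ∑ B : AmbIdx n, (ambG h)⁻¹ A B * wirt (wirtBar f B) A z

/-- `z_b := Σ_a h_{āb}·conj(z^a)` for `z ∈ ℂⁿ`. -/
def lowZ {n : ℕ} (h : Matrix (Fin n) (Fin n) ℂ) (z : Fin n → ℂ) (b : Fin n) : ℂ :=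
  ∑ a : Fin n, h a b * conj (z a)

/-- The `g`-lowered covector `W_B := Σ_A conj(W^A)·G_{AB}`. -/
def lowAmb {n : ℕ} (h : Matrix (Fin n) (Fin n) ℂ) (z : Amb n) (B : AmbIdx n) : ℂ :=
  ∑ C : AmbIdx n, conj (z C) * ambG h C B

/-- The vector `X = (z⁰, z⁰z¹, …, z⁰zⁿ, z⁰(ρ − ½Σ_a z^a z_a + iσ))`. -/
def vecX {n : ℕ} (h : Matrix (Fin n) (Fin n) ℂ) (z0 : ℂ) (z : Fin n → ℂ) (ρ σ : ℝ) :
    Amb n :=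
  fun A =>
    match A with
    | Sum.inl _ => z0
    | Sum.inr (Sum.inl a) => z0 * z a
    | Sum.inr (Sum.inr _) =>
        z0 * ((ρ : ℂ) - (1 / 2) * (∑ a : Fin n, z a * lowZ h z a) + Complex.I * (σ : ℂ))

/-- The vector `Y_b = (0, z⁰δ¹_b, …, z⁰δⁿ_b, −z⁰z_b)`. -/
def vecY {n : ℕ} (h : Matrix (Fin n) (Fin n) ℂ) (z0 : ℂ) (z : Fin n → ℂ) (b : Fin n) :
    Amb n :=
  fun A =>
    match A with
    | Sum.inl _ => 0
    | Sum.inr (Sum.inl a) => if a = b then z0 else 0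
    | Sum.inr (Sum.inr _) => -(z0 * lowZ h z b)

/-- The vector `Z = (0, …, 0, z⁰)`. -/
def vecZ {n : ℕ} (z0 : ℂ) : Amb n :=
  fun A =>
    match A with
    | Sum.inr (Sum.inr _) => z0
    | _ => 0

/-- `Y^c_B := Σ_d (h⁻¹)_{cd}·(Y_d)_B`. -/
def vecYup {n : ℕ} (h : Matrix (Fin n) (Fin n) ℂ) (z0 : ℂ) (z : Fin n → ℂ) (c : Fin n)
    (B : AmbIdx n) : ℂ :=
  ∑ d : Fin n, h⁻¹ c d * lowAmb h (vecY h z0 z d) B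


section AuxHelpers

variable {n : ℕ} {h : Matrix (Fin n) (Fin n) ℂ}

lemma aux_herm_conj (hherm : h.IsHermitian) (a b : Fin n) : conj (h a b) = h b a := by
  have := congrFun (congrFun hherm b) a
  simpa [Matrix.conjTranspose_apply] using this

lemma aux_inv_mul (hnd : IsUnit h.det) (c b : Fin n) :
    ∑ d : Fin n, h⁻¹ c d * h d b = if c = b then 1 else 0 := by
  have := congrFun (congrFun (Matrix.nonsing_inv_mul h hnd) c) b
  simpa [Matrix.mul_apply, Matrix.one_apply] using this

lemma aux_inv_lowZ (hherm : h.IsHermitian) (hnd : IsUnit h.det) (z : Fin n → ℂ) (c : Fin n) :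
    ∑ d : Fin n, h⁻¹ c d * conj (lowZ h z d) = z c := by
  have key : ∀ d, conj (lowZ h z d) = ∑ a : Fin n, h d a * z a := by
    intro d
    simp only [lowZ, map_sum, map_mul, Complex.conj_conj]
    exact Finset.sum_congr rfl fun a _ => by rw [aux_herm_conj hherm]
  simp only [key, Finset.mul_sum]
  rw [Finset.sum_comm]
  have : ∀ a : Fin n, ∑ d : Fin n, h⁻¹ c d * (h d a * z a)
      = (if c = a then 1 else 0) * z a := by
    intro a
    rw [← aux_inv_mul hnd c a, Finset.sum_mul]
    exact Finset.sum_congr rfl fun d _ => by ring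
  simp [this]

lemma aux_S_real (hherm : h.IsHermitian) (z : Fin n → ℂ) :
    conj (∑ a : Fin n, z a * lowZ h z a) = ∑ a : Fin n, z a * lowZ h z a := by
  simp only [lowZ, Finset.mul_sum, map_sum, map_mul, Complex.conj_conj]
  rw [Finset.sum_comm]
  refine Finset.sum_congr rfl fun a _ => Finset.sum_congr rfl fun b _ => ?_
  rw [aux_herm_conj hherm]
  ring

lemma aux_lowAmb_eq (w : Amb n) (B : AmbIdx n) :
    lowAmb h w B = conj (w (Sum.inl ())) * ambG h (Sum.inl ()) B
      + (∑ a : Fin n, conj (w (Sum.inr (Sum.inl a))) * ambG h (Sum.inr (Sum.inl a)) B)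
      + conj (w (Sum.inr (Sum.inr ()))) * ambG h (Sum.inr (Sum.inr ())) B := by
  simp [lowAmb, Fintype.sum_sum_type, add_assoc]

lemma aux_lowAmb_vecZ (z0 : ℂ) (B : AmbIdx n) :
    lowAmb h (vecZ z0) B = if B = Sum.inl () then conj z0 else 0 := by
  rcases B with _ | b | _ <;> simp [aux_lowAmb_eq, vecZ, ambG]

lemma aux_lowAmb_vecX_0 (hherm : h.IsHermitian) (z0 : ℂ) (z : Fin n → ℂ) (ρ σ : ℝ) (u : Unit) :
    lowAmb h (vecX h z0 z ρ σ) (Sum.inl u) =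
      conj z0 * ((ρ : ℂ) - (1 / 2) * (∑ a : Fin n, z a * lowZ h z a) - Complex.I * σ) := by
  simp [aux_lowAmb_eq, vecX, ambG, aux_S_real hherm, Complex.conj_ofNat]
  ring_nf
  tauto

lemma aux_lowAmb_vecX_a (z0 : ℂ) (z : Fin n → ℂ) (ρ σ : ℝ) (b : Fin n) :
    lowAmb h (vecX h z0 z ρ σ) (Sum.inr (Sum.inl b)) = conj z0 * lowZ h z b := by
  simp [aux_lowAmb_eq, vecX, ambG, lowZ, Finset.mul_sum]
  exact Finset.sum_congr rfl fun a _ => by ring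

lemma aux_lowAmb_vecX_inf (z0 : ℂ) (z : Fin n → ℂ) (ρ σ : ℝ) (u : Unit) :
    lowAmb h (vecX h z0 z ρ σ) (Sum.inr (Sum.inr u)) = conj z0 := by
  simp [aux_lowAmb_eq, vecX, ambG]

lemma aux_vecYup_0 (hherm : h.IsHermitian) (hnd : IsUnit h.det)
    (z0 : ℂ) (z : Fin n → ℂ) (c : Fin n) (u : Unit) :
    vecYup h z0 z c (Sum.inl u) = -(conj z0 * z c) := by
  have : ∀ d : Fin n, lowAmb h (vecY h z0 z d) (Sum.inl ())
      = -(conj z0 * conj (lowZ h z d)) := by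
    intro d
    simp [aux_lowAmb_eq, vecY, ambG]
  simp only [vecYup, this]
  have := aux_inv_lowZ hherm hnd z c
  calc ∑ d : Fin n, h⁻¹ c d * -(conj z0 * conj (lowZ h z d))
      = -(conj z0 * ∑ d : Fin n, h⁻¹ c d * conj (lowZ h z d)) := by
        rw [Finset.mul_sum, ← Finset.sum_neg_distrib]
        exact Finset.sum_congr rfl fun d _ => by ring
    _ = -(conj z0 * z c) := by rw [this]

lemma aux_vecYup_a (hnd : IsUnit h.det) (z0 : ℂ) (z : Fin n → ℂ) (c b : Fin n) :
    vecYup h z0 z c (Sum.inr (Sum.inl b)) = conj z0 * (if c = b then 1 else 0) := by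
  have key : ∀ d : Fin n, lowAmb h (vecY h z0 z d) (Sum.inr (Sum.inl b))
      = conj z0 * h d b := by
    intro d
    simp [aux_lowAmb_eq, vecY, ambG, apply_ite conj, Finset.mul_sum, mul_ite]
  simp only [vecYup, key]
  rw [← aux_inv_mul hnd c b, Finset.mul_sum]
  exact Finset.sum_congr rfl fun d _ => by ring

lemma aux_vecYup_inf (z0 : ℂ) (z : Fin n → ℂ) (c : Fin n) (u : Unit) :
    vecYup h z0 z c (Sum.inr (Sum.inr u)) = 0 := by
  have : ∀ d : Fin n, lowAmb h (vecY h z0 z d) (Sum.inr (Sum.inr ())) = 0 := by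
    intro d
    simp [aux_lowAmb_eq, vecY, ambG]
  simp [vecYup, this]

end AuxHelpers

/-- for all `A, B`:
`|z⁰|²·δ^A_B = (X^A − ρ·Z^A)·Z_B + Z^A·(X_B − ρ·Z_B) + Σ_{c=1}^n (Y_c)^A·Y^c_B`. -/
theorem ambient_identity
    (n : ℕ) (hn : 1 ≤ n) (h : Matrix (Fin n) (Fin n) ℂ)
    (hherm : h.IsHermitian) (hnd : IsUnit h.det)
    (z0 : ℂ) (z : Fin n → ℂ) (ρ σ : ℝ) :
    ∀ A B : AmbIdx n,
      (Complex.normSq z0 : ℂ) * (if A = B then 1 else 0) =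
        (vecX h z0 z ρ σ A - (ρ : ℂ) * vecZ z0 A) * lowAmb h (vecZ z0) B +
          vecZ z0 A * (lowAmb h (vecX h z0 z ρ σ) B - (ρ : ℂ) * lowAmb h (vecZ z0) B) +
            ∑ c : Fin n, vecY h z0 z c A * vecYup h z0 z c B := by
  intro A B
  have hS := aux_S_real hherm z
  rcases A with _ | a | _ <;> rcases B with _ | b | _ <;>
    simp only [aux_lowAmb_vecZ, aux_lowAmb_vecX_0 hherm, aux_lowAmb_vecX_a,
      aux_lowAmb_vecX_inf, aux_vecYup_0 hherm hnd, aux_vecYup_a hnd, aux_vecYup_inf,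
      vecX, vecY, vecZ, if_true, if_false, reduceCtorEq, Sum.inr.injEq, Sum.inl.injEq,
      Complex.normSq_eq_conj_mul_self]
  -- A = 0 cases and other easy cases
  case inl.inr.inl => simp
  case inl.inr.inr => simp
  case inl.inl => simp; ring
  case inr.inl.inl =>
    have key : ∑ x : Fin n, (if a = x then z0 else 0) * -(conj z0 * z x)
        = -(z0 * (conj z0 * z a)) := by
      simp [ite_mul]
    rw [key]; ring
  case inr.inl.inr.inl =>
    have key : ∑ x : Fin n, (if a = x then z0 else 0) * (conj z0 * if x = b then 1 else 0)
        = if a = b then z0 * conj z0 else 0 := by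
      simp [ite_mul, mul_ite]
    rw [key]
    by_cases hab : a = b <;> simp [hab] <;> ring
  case inr.inl.inr.inr =>
    simp
  case inr.inr.inl =>
    have key : ∑ x : Fin n, -(z0 * lowZ h z x) * -(conj z0 * z x)
        = z0 * conj z0 * ∑ x : Fin n, z x * lowZ h z x := by
      rw [Finset.mul_sum]
      exact Finset.sum_congr rfl fun x _ => by ring
    rw [key]; ring
  case inr.inr.inr.inl =>
    have key : ∑ x : Fin n, -(z0 * lowZ h z x) * (conj z0 * if x = b then 1 else 0)
        = -(z0 * lowZ h z b * conj z0) := by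
      simp [mul_ite, ite_mul, neg_mul]
    rw [key]; ring
  case inr.inr.inr.inr =>
    simp only [Finset.mul_sum, mul_zero, Finset.sum_const_zero]
    ring
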